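/- If the MSEL_Σ2 sequent ⊢ ?^∞Π, ⟨c₀⟩ is derivable in the (unfocused) sequent calculus for MSEL_Σ2, then the two-register Minsky machine halts from the initial configuration c₀. -/

import Mathlib

namespace Msel

/-- Subexponential labels of the signature `Σ₂ = ⟨{∞, a, b}, {∞}, ≤⟩`. -/
inductive Lbl : Type
  | inf  -- the unbounded label ∞
  | la   -- the bounded label a
  | lb   -- the bounded label b
deriving DecidableEq

/-- The pre-order on labels: the reflexive-transitive closure of `a ≤ ∞` and `b ≤ ∞`. -/
def Lbl.le (u v : Lbl) : Prop := u = v ∨ v = Lbl.inf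

/-- A label is unbounded iff it is ∞. -/
def Lbl.unb (u : Lbl) : Prop := u = Lbl.inf

/-- Formulas of multiplicative subexponential logic MSEL_Σ₂.
Atoms are named by natural numbers. -/
inductive Fm : Type
  | atom (p : ℕ)            -- atom p
  | natom (p : ℕ)           -- negated atom ¬p
  | tens (A B : Fm)         -- A ⊗ B
  | one                     -- 1
  | par (A B : Fm)          -- A ⅋ B
  | bot                     -- ⊥
  | bang (u : Lbl) (A : Fm) -- !^u A
  | qm (u : Lbl) (A : Fm)   -- ?^u A
deriving DecidableEq

/-- The (unfocused) one-sided sequent calculus for MSEL_Σ₂; `Der Γ` means `⊢ Γ` is derivable. -/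
inductive Der : Multiset Fm → Prop
  | init (p : ℕ) : Der {Fm.atom p, Fm.natom p}
  | tens {Γ Δ : Multiset Fm} {A B : Fm} :
      Der (A ::ₘ Γ) → Der (B ::ₘ Δ) → Der (Fm.tens A B ::ₘ (Γ + Δ))
  | one : Der {Fm.one}
  | par {Γ : Multiset Fm} {A B : Fm} :
      Der (A ::ₘ B ::ₘ Γ) → Der (Fm.par A B ::ₘ Γ)
  | bot {Γ : Multiset Fm} : Der Γ → Der (Fm.bot ::ₘ Γ)
  | qm {Γ : Multiset Fm} {A : Fm} {u : Lbl} :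
      Der (A ::ₘ Γ) → Der (Fm.qm u A ::ₘ Γ)
  | bang {Γ : Multiset Fm} {C : Fm} {u : Lbl} :
      (∀ F ∈ Γ, ∃ v B, F = Fm.qm v B ∧ Lbl.le u v) →
      Der (C ::ₘ Γ) → Der (Fm.bang u C ::ₘ Γ)
  | weak {Γ : Multiset Fm} {A : Fm} :
      Der Γ → Der (Fm.qm Lbl.inf A ::ₘ Γ)
  | contr {Γ : Multiset Fm} {A : Fm} :
      Der (Fm.qm Lbl.inf A ::ₘ Fm.qm Lbl.inf A ::ₘ Γ) →
      Der (Fm.qm Lbl.inf A ::ₘ Γ)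

/-- Positive formulas: atoms, ⊗, 1, !. -/
def Fm.isPos : Fm → Prop
  | .atom _ => True
  | .tens _ _ => True
  | .one => True
  | .bang _ _ => True
  | _ => False

/-- Negative formulas: negated atoms, ⅋, ⊥, ?. -/
def Fm.isNeg : Fm → Prop
  | .natom _ => True
  | .par _ _ => True
  | .bot => True
  | .qm _ _ => True
  | _ => False

/-- Neutral formulas: positive formulas, atoms, negated atoms and ?-formulas
(i.e. everything except ⅋ and ⊥). -/
def Fm.isNeutral : Fm → Prop
  | .par _ _ => False
  | .bot => False
  | _ => True

/-- The focused sequent calculus for MSEL_Σ₂.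
`FDer Γ none` is the unfocused sequent `⊢ Γ`;
`FDer Ω (some A)` is the focused sequent `⊢ Ω, [A]`. -/
inductive FDer : Multiset Fm → Option Fm → Prop
  | finit {Θ : Multiset Fm} (p : ℕ) :
      (∀ F ∈ Θ, ∃ B, F = Fm.qm Lbl.inf B) →
      FDer (Fm.natom p ::ₘ Θ) (some (Fm.atom p))
  | ftens {Θ Ω₁ Ω₂ : Multiset Fm} {B C : Fm} :
      (∀ F ∈ Θ, ∃ A, F = Fm.qm Lbl.inf A) →
      (∀ F ∈ Ω₁, F.isNeutral) → (∀ F ∈ Ω₂, F.isNeutral) →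
      FDer (Θ + Ω₁) (some B) → FDer (Θ + Ω₂) (some C) →
      FDer (Θ + Ω₁ + Ω₂) (some (Fm.tens B C))
  | fone {Θ : Multiset Fm} :
      (∀ F ∈ Θ, ∃ B, F = Fm.qm Lbl.inf B) → FDer Θ (some Fm.one)
  | fbang {Γ Δ : Multiset Fm} {u : Lbl} {C : Fm} :
      (∀ F ∈ Γ, ∃ v B, F = Fm.qm v B ∧ Lbl.le u v) →
      (∀ F ∈ Δ, ∃ B, F = Fm.qm Lbl.inf B) →
      FDer (C ::ₘ Γ) none → FDer (Γ + Δ) (some (Fm.bang u C))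
  | blur {Ω : Multiset Fm} {N : Fm} :
      N.isNeg → (∀ F ∈ Ω, F.isNeutral) →
      FDer (N ::ₘ Ω) none → FDer Ω (some N)
  | par {Γ : Multiset Fm} {A B : Fm} :
      FDer (A ::ₘ B ::ₘ Γ) none → FDer (Fm.par A B ::ₘ Γ) none
  | bot {Γ : Multiset Fm} : FDer Γ none → FDer (Fm.bot ::ₘ Γ) none
  | decide {Ω : Multiset Fm} {P : Fm} :
      P.isPos → (∀ F ∈ Ω, F.isNeutral) →
      FDer Ω (some P) → FDer (P ::ₘ Ω) none
  | ldecide {Ω : Multiset Fm} {u : Lbl} {A : Fm} :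
      u ≠ Lbl.inf → (∀ F ∈ Ω, F.isNeutral) →
      FDer Ω (some A) → FDer (Fm.qm u A ::ₘ Ω) none
  | udecide {Ω : Multiset Fm} {A : Fm} :
      (∀ F ∈ Ω, F.isNeutral) →
      FDer (Fm.qm Lbl.inf A ::ₘ Ω) (some A) →
      FDer (Fm.qm Lbl.inf A ::ₘ Ω) none

/-! ## Two-register Minsky machines -/

/-- The instruction set of a two-register Minsky machine. -/
inductive Instr : Type
  | halt | incra | incrb | decra | decrb | isza | iszb
deriving DecidableEq

/-- A configuration `⟨q, v⟩`: a state (states are names by natural numbers,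
with `0` the distinguished halting state `*`) together with the values
`v(a)` and `v(b)` of the two registers. -/
structure Cfg : Type where
  q : ℕ
  a : ℕ
  b : ℕ
deriving DecidableEq

/-- A two-register Minsky machine is presented by its finite labelled transition
table: a finite list of (source state, instruction, target state) triples. -/
abbrev Prog : Type := List (ℕ × Instr × ℕ)

/-- The labelled transition relation between configurations generated by the
table `P`, following the seven schemas (the halting state is `0`). -/
inductive Step (P : Prog) : Cfg → Instr → Cfg → Prop
  | halt {q m n : ℕ} : (q, Instr.halt, 0) ∈ P → q ≠ 0 →
      Step P ⟨q, m, n⟩ Instr.halt ⟨0, 0, 0⟩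
  | incra {q r m n : ℕ} : (q, Instr.incra, r) ∈ P → q ≠ r →
      Step P ⟨q, m, n⟩ Instr.incra ⟨r, m + 1, n⟩
  | incrb {q r m n : ℕ} : (q, Instr.incrb, r) ∈ P → q ≠ r →
      Step P ⟨q, m, n⟩ Instr.incrb ⟨r, m, n + 1⟩
  | decra {q r m n : ℕ} : (q, Instr.decra, r) ∈ P → q ≠ r →
      Step P ⟨q, m + 1, n⟩ Instr.decra ⟨r, m, n⟩
  | decrb {q r m n : ℕ} : (q, Instr.decrb, r) ∈ P → q ≠ r →
      Step P ⟨q, m, n + 1⟩ Instr.decrb ⟨r, m, n⟩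
  | isza {q r n : ℕ} : (q, Instr.isza, r) ∈ P → q ≠ r →
      Step P ⟨q, 0, n⟩ Instr.isza ⟨r, 0, n⟩
  | iszb {q r m : ℕ} : (q, Instr.iszb, r) ∈ P → q ≠ r →
      Step P ⟨q, m, 0⟩ Instr.iszb ⟨r, m, 0⟩

/-- The transition relation is deterministic. -/
def Deterministic (P : Prog) : Prop :=
  ∀ {c : Cfg} {i₁ i₂ : Instr} {d₁ d₂ : Cfg},
    Step P c i₁ d₁ → Step P c i₂ d₂ → i₁ = i₂ ∧ d₁ = d₂

/-- Every entry of the table generates transitions fitting one of the seven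
schemas: halt entries target the halting state `0` and have non-halting source,
and the other entries have distinct source and target states. -/
def WellFormed (P : Prog) : Prop :=
  ∀ e ∈ P, (e.2.1 = Instr.halt → e.2.2 = 0 ∧ e.1 ≠ 0) ∧
           (e.2.1 ≠ Instr.halt → e.1 ≠ e.2.2)

/-- The machine halts from `c₀` if some finite sequence of transitions leads
from `c₀` to the halting configuration `⟨*, {a:0, b:0}⟩`. -/
def Halts (P : Prog) (c₀ : Cfg) : Prop :=
  Relation.ReflTransGen (fun c d => ∃ i, Step P c i d) c₀ ⟨0, 0, 0⟩

/-! ## The encoding -/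

/-- The atom `r_a`. -/
def raA : Fm := Fm.atom 0
/-- The atom `r_b`. -/
def rbA : Fm := Fm.atom 1
/-- The atom `h`. -/
def hA : Fm := Fm.atom 2
/-- The negated atom `¬r_a`. -/
def nRa : Fm := Fm.natom 0
/-- The negated atom `¬r_b`. -/
def nRb : Fm := Fm.natom 1
/-- The negated atom `¬h`. -/
def nH : Fm := Fm.natom 2
/-- The atom for state `q` (distinct from `r_a`, `r_b`, `h`). -/
def stA (q : ℕ) : Fm := Fm.atom (q + 3)
/-- The negated atom `¬q` for state `q`. -/
def nSt (q : ℕ) : Fm := Fm.natom (q + 3)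
/-- The formula `?^a ¬r_a`. -/
def qa : Fm := Fm.qm Lbl.la nRa
/-- The formula `?^b ¬r_b`. -/
def qb : Fm := Fm.qm Lbl.lb nRb

/-- The formulas encoding one entry of the transition table. -/
def encInstr : ℕ × Instr × ℕ → Multiset Fm
  | (q, Instr.halt, _) =>
      {Fm.tens (stA q) nH,
       Fm.tens (Fm.tens hA (Fm.bang Lbl.la raA)) nH,
       Fm.tens (Fm.tens hA (Fm.bang Lbl.lb rbA)) nH,
       Fm.tens hA (Fm.bang Lbl.inf Fm.one)}
  | (q, Instr.incra, r) => {Fm.tens (stA q) (Fm.par (nSt r) qa)}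
  | (q, Instr.incrb, r) => {Fm.tens (stA q) (Fm.par (nSt r) qb)}
  | (q, Instr.decra, r) => {Fm.tens (Fm.tens (stA q) (Fm.bang Lbl.la raA)) (nSt r)}
  | (q, Instr.decrb, r) => {Fm.tens (Fm.tens (stA q) (Fm.bang Lbl.lb rbA)) (nSt r)}
  | (q, Instr.isza, r) => {Fm.tens (stA q) (Fm.bang Lbl.lb (nSt r))}
  | (q, Instr.iszb, r) => {Fm.tens (stA q) (Fm.bang Lbl.la (nSt r))}

/-- The context `Π` encoding the transition relation of the machine `P`. -/
def PiCtx (P : Prog) : Multiset Fm := (P.map encInstr).sum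

/-- `?^∞ Γ`: each element of `Γ` prefixed by `?^∞`. -/
def qmInf (Γ : Multiset Fm) : Multiset Fm := Γ.map (Fm.qm Lbl.inf)

/-- The encoding `⟨c⟩` of a configuration: `v(a)` copies of `?^a ¬r_a`,
`v(b)` copies of `?^b ¬r_b`, and `¬q`. -/
def encCfg (c : Cfg) : Multiset Fm :=
  Multiset.replicate c.a qa + Multiset.replicate c.b qb + {nSt c.q}

/-- The sequent `⊢ ?^∞Π, ⟨c⟩` encoding the halting problem from `c`. -/
def encSeq (P : Prog) (c : Cfg) : Multiset Fm := qmInf (PiCtx P) + encCfg c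

/-! ## Concrete Gödel encodings -/

/-- Gödel code of a label. -/
def Lbl.code : Lbl → ℕ
  | .inf => 0 | .la => 1 | .lb => 2

/-- A concrete (effective) Gödel encoding of formulas. -/
def Fm.code : Fm → ℕ
  | .atom p => Nat.pair 0 p
  | .natom p => Nat.pair 1 p
  | .tens A B => Nat.pair 2 (Nat.pair A.code B.code)
  | .one => Nat.pair 3 0
  | .par A B => Nat.pair 4 (Nat.pair A.code B.code)
  | .bot => Nat.pair 5 0
  | .bang u A => Nat.pair 6 (Nat.pair u.code A.code)
  | .qm u A => Nat.pair 7 (Nat.pair u.code A.code)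

/-- Gödel code of a list of natural numbers. -/
def codeList : List ℕ → ℕ
  | [] => 0
  | x :: l => Nat.pair x (codeList l) + 1

/-- A concrete (effective) Gödel encoding of finite multisets of formulas
(a sequent is coded by the sorted list of the codes of its elements). -/
def codeSeq (Γ : Multiset Fm) : ℕ :=
  codeList ((Γ.map Fm.code).sort (· ≤ ·))

/-- Gödel code of an instruction. -/
def Instr.code : Instr → ℕ
  | .halt => 0 | .incra => 1 | .incrb => 2 | .decra => 3
  | .decrb => 4 | .isza => 5 | .iszb => 6

/-- A concrete (effective) Gödel encoding of machines. -/
def codeProg (P : Prog) : ℕ :=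
  codeList (P.map fun e => Nat.pair e.1 (Nat.pair e.2.1.code e.2.2))

/-- A concrete (effective) Gödel encoding of configurations. -/
def codeCfg (c : Cfg) : ℕ := Nat.pair c.q (Nat.pair c.a c.b)


/-! Phase semantics. In a commutative monoid with a pole, a formula `A` is interpreted by a
set `dual A` of counter-elements, and a derivable sequent `⊢ Γ` puts every sum of
counter-elements of its formulas into the pole. We use the monoid `ℕ × ℕ × Multiset Ctl` of
register contents and control tokens, whose pole contains `(k, l, {q})` exactly when the
machine halts from `⟨q, k, l⟩`. Every formula of `Π` has `0` as a counter-element, because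
its transition propagates halting backwards, and `⟨c₀⟩` has the counter-element
`(a, b, {q₀})`; soundness puts it into the pole. -/

open scoped Pointwise

section Orthogonality

variable {M : Type*} [AddCommMonoid M]

def orth (B X : Set M) : Set M := {m | ∀ x ∈ X, m + x ∈ B}

variable {B X Y : Set M}

theorem add_subset_iff_subset_orth : X + Y ⊆ B ↔ X ⊆ orth B Y := by
  refine ⟨fun h x hx y hy => h (Set.add_mem_add hx hy), ?_⟩
  rintro h _ ⟨x, hx, y, hy, rfl⟩
  exact h hx y hy

theorem orth_add_subset : orth B X + X ⊆ B :=
  add_subset_iff_subset_orth.mpr subset_rfl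

theorem orth_anti (h : X ⊆ Y) : orth B Y ⊆ orth B X :=
  fun _ hm x hx => hm x (h hx)

theorem subset_orth_orth : X ⊆ orth B (orth B X) :=
  add_subset_iff_subset_orth.mp (add_comm (orth B X) X ▸ orth_add_subset)

theorem orth_orth_orth : orth B (orth B (orth B X)) = orth B X :=
  (orth_anti subset_orth_orth).antisymm subset_orth_orth

theorem zero_mem_orth : 0 ∈ orth B X ↔ X ⊆ B := by
  simp [orth, Set.subset_def]

theorem orth_orth_add_subset (h : X + Y ⊆ B) : orth B (orth B X) + Y ⊆ B := by
  rw [add_subset_iff_subset_orth] at h ⊢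
  exact orth_orth_orth (B := B) (X := Y) ▸ orth_anti (orth_anti h)

theorem orth_orth_add_orth_orth_subset (h : X + Y ⊆ B) :
    orth B (orth B X) + orth B (orth B Y) ⊆ B :=
  orth_orth_add_subset <| by
    rw [add_comm] at h ⊢
    exact orth_orth_add_subset h

theorem orth_orth_add_subset_orth_orth :
    orth B (orth B X) + orth B (orth B Y) ⊆ orth B (orth B (X + Y)) := by
  rw [← add_subset_iff_subset_orth, add_assoc]
  refine orth_orth_add_subset ?_
  rw [add_left_comm]
  refine orth_orth_add_subset ?_
  rw [← add_assoc, add_comm Y]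
  exact add_subset_iff_subset_orth.mpr subset_orth_orth

end Orthogonality

theorem AddSubmonoid.multiset_sum_subset {M : Type*} [AddCommMonoid M] (S : AddSubmonoid M)
    {s : Multiset (Set M)} (h : ∀ X ∈ s, X ⊆ S) : s.sum ⊆ S := by
  induction s using Multiset.induction_on with
  | empty => simp [S.zero_mem]
  | cons X s ih =>
    rw [Multiset.sum_cons]
    exact AddSubmonoid.add_subset (h X (s.mem_cons_self X))
      (ih fun Y hY => h Y (Multiset.mem_cons_of_mem hY))

structure PhaseModel (M : Type*) [AddCommMonoid M] where
  pole : Set M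
  val : ℕ → Set M
  subexp : Lbl → AddSubmonoid M
  subexp_anti {u v : Lbl} : u.le v → subexp v ≤ subexp u
  subexp_inf : subexp Lbl.inf = ⊥

namespace PhaseModel

variable {M : Type*} [AddCommMonoid M] (𝔐 : PhaseModel M)

/-- `𝔐.dual A` generates the fact interpreting the linear negation of `A`;
the fact interpreting `A` itself is `𝔐.interp A = orth 𝔐.pole (𝔐.dual A)`. -/
def dual : Fm → Set M
  | .atom p => orth 𝔐.pole (𝔐.val p)
  | .natom p => 𝔐.val p
  | .tens A B => orth 𝔐.pole (orth 𝔐.pole (dual A) + orth 𝔐.pole (dual B))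
  | .one => 𝔐.pole
  | .par A B => dual A + dual B
  | .bot => 0
  | .bang u A => orth 𝔐.pole (orth 𝔐.pole (dual A) ∩ 𝔐.subexp u)
  | .qm u A => dual A ∩ 𝔐.subexp u

def interp (A : Fm) : Set M := orth 𝔐.pole (𝔐.dual A)

variable {𝔐}

theorem dual_qm_subset_subexp {u : Lbl} {A : Fm} : 𝔐.dual (.qm u A) ⊆ 𝔐.subexp u :=
  Set.inter_subset_right

theorem dual_qm_inf_subset_zero {A : Fm} : 𝔐.dual (.qm .inf A) ⊆ 0 := fun _ hx => by
  simpa [𝔐.subexp_inf] using dual_qm_subset_subexp hx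

theorem sum_dual_subset_subexp {u : Lbl} {Γ : Multiset Fm}
    (hΓ : ∀ F ∈ Γ, ∃ v B, F = Fm.qm v B ∧ u.le v) : (Γ.map 𝔐.dual).sum ⊆ 𝔐.subexp u := by
  refine AddSubmonoid.multiset_sum_subset _ fun X hX => ?_
  obtain ⟨F, hF, rfl⟩ := Multiset.mem_map.mp hX
  obtain ⟨v, B, rfl, huv⟩ := hΓ F hF
  exact dual_qm_subset_subexp.trans (𝔐.subexp_anti huv)

theorem sum_dual_subset_pole {Γ : Multiset Fm} (h : Der Γ) : (Γ.map 𝔐.dual).sum ⊆ 𝔐.pole := by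
  induction h with
  | init p => simpa [dual, add_comm] using orth_add_subset (B := 𝔐.pole) (X := 𝔐.val p)
  | one => simp [dual]
  | @tens Γ Δ A B _ _ ihA ihB =>
    rw [Multiset.map_cons, Multiset.sum_cons, Multiset.map_add, Multiset.sum_add]
    rw [Multiset.map_cons, Multiset.sum_cons, add_comm, add_subset_iff_subset_orth] at ihA ihB
    exact orth_add_subset.trans' (Set.add_subset_add_left (Set.add_subset_add ihA ihB))
  | par _ ih => simpa [dual, add_assoc] using ih
  | bot _ ih => simpa [dual] using ih
  | qm _ ih =>
    simp only [Multiset.map_cons, Multiset.sum_cons] at ih ⊢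
    exact (Set.add_subset_add_right Set.inter_subset_left).trans ih
  | bang hΓ _ ih =>
    rw [Multiset.map_cons, Multiset.sum_cons, add_comm, add_subset_iff_subset_orth] at ih
    rw [Multiset.map_cons, Multiset.sum_cons, dual, add_comm, add_subset_iff_subset_orth]
    exact subset_orth_orth.trans' (Set.subset_inter ih (sum_dual_subset_subexp hΓ))
  | weak _ ih =>
    rw [Multiset.map_cons, Multiset.sum_cons]
    exact (Set.add_subset_add_right dual_qm_inf_subset_zero).trans (by simpa using ih)
  | contr _ ih =>
    simp only [Multiset.map_cons, Multiset.sum_cons] at ih ⊢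
    refine Set.Subset.trans ?_ ih
    rintro _ ⟨x, hx, s, hs, rfl⟩
    obtain rfl : x = 0 := dual_qm_inf_subset_zero hx
    exact ⟨0, hx, 0 + s, Set.add_mem_add hx hs, zero_add _⟩

theorem interp_tens_subset {A B : Fm} {X Y : Set M}
    (hA : 𝔐.interp A ⊆ orth 𝔐.pole (orth 𝔐.pole X))
    (hB : 𝔐.interp B ⊆ orth 𝔐.pole (orth 𝔐.pole Y)) :
    𝔐.interp (.tens A B) ⊆ orth 𝔐.pole (orth 𝔐.pole (X + Y)) := by
  calc 𝔐.interp (.tens A B) = orth 𝔐.pole (orth 𝔐.pole (𝔐.interp A + 𝔐.interp B)) := rfl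
    _ ⊆ orth 𝔐.pole (orth 𝔐.pole (orth 𝔐.pole (orth 𝔐.pole (X + Y)))) :=
      orth_anti (orth_anti ((Set.add_subset_add hA hB).trans orth_orth_add_subset_orth_orth))
    _ = orth 𝔐.pole (orth 𝔐.pole (X + Y)) := orth_orth_orth

theorem zero_mem_dual_tens {A B : Fm} {X Y : Set M}
    (hA : 𝔐.interp A ⊆ orth 𝔐.pole (orth 𝔐.pole X))
    (hB : 𝔐.interp B ⊆ orth 𝔐.pole (orth 𝔐.pole Y)) (h : X + Y ⊆ 𝔐.pole) :
    0 ∈ 𝔐.dual (.tens A B) :=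
  zero_mem_orth.mpr ((Set.add_subset_add hA hB).trans (orth_orth_add_orth_orth_subset h))

theorem zero_mem_sum_dual_qmInf {Γ : Multiset Fm} (h : ∀ F ∈ Γ, 0 ∈ 𝔐.dual F) :
    0 ∈ ((qmInf Γ).map 𝔐.dual).sum := by
  simpa using Set.multiset_sum_mem_multiset_sum (qmInf Γ) 𝔐.dual 0 <| by
    simp only [qmInf, Multiset.mem_map]
    rintro _ ⟨F, hF, rfl⟩
    exact ⟨h F hF, by simp [𝔐.subexp_inf]⟩

end PhaseModel

theorem Halts.of_step {P : Prog} {c d : Cfg} {i : Instr} (hs : Step P c i d) (hd : Halts P d) :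
    Halts P c :=
  Relation.ReflTransGen.head ⟨i, hs⟩ hd

theorem mem_PiCtx {P : Prog} {F : Fm} : F ∈ PiCtx P ↔ ∃ e ∈ P, F ∈ encInstr e := by
  rw [PiCtx, ← Multiset.sum_coe, ← Multiset.join, Multiset.mem_join]
  simp

inductive Ctl : Type
  | halt
  | state (q : ℕ)
  | testA
  | testB

/-- Resources: the contents of registers `a` and `b`, and a multiset of control tokens. -/
abbrev Store : Type := ℕ × ℕ × Multiset Ctl

namespace Store

def ra : Store := (1, 0, 0)

def rb : Store := (0, 1, 0)

def ctl (c : Ctl) : Store := (0, 0, {c})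

def atomTok : ℕ → Store
  | 0 => ra
  | 1 => rb
  | 2 => ctl .halt
  | p + 3 => ctl (.state p)

/-- The test tokens accept exactly one register token; they prevent `!^a r_a` and `!^b r_b` from
consuming several register tokens at once (see `interp_raA_inter_subexp`). -/
def Accepts (P : Prog) : Ctl → ℕ → ℕ → Prop
  | .halt, _, _ => True
  | .state q, k, l => Halts P ⟨q, k, l⟩
  | .testA, k, l => k = 1 ∧ l = 0
  | .testB, k, l => k = 0 ∧ l = 1

def pole (P : Prog) : Set Store := {m | ∃ c, m.2.2 = {c} ∧ Accepts P c m.1 m.2.1}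

theorem add_ctl_mem_pole {P : Prog} {x : Store} {c : Ctl} :
    x + ctl c ∈ pole P ↔ x.2.2 = 0 ∧ Accepts P c x.1 x.2.1 := by
  have key : ∀ c', x.2.2 + {c} = {c'} ↔ x.2.2 = 0 ∧ c = c' := by
    refine fun c' => ⟨fun h => ?_, by rintro ⟨h, rfl⟩; simp [h]⟩
    have hx : x.2.2 = 0 := by simpa using congrArg Multiset.card h
    simpa [hx] using h
  simp [pole, ctl, key]

def subexp : Lbl → AddSubmonoid Store
  | .inf => ⊥
  | .la => AddSubmonoid.multiples ra
  | .lb => AddSubmonoid.multiples rb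

theorem mem_subexp_la {x : Store} : x ∈ subexp .la ↔ ∃ n : ℕ, x = (n, 0, 0) := by
  simp [subexp, AddSubmonoid.mem_multiples_iff, ra, eq_comm]

theorem mem_subexp_lb {x : Store} : x ∈ subexp .lb ↔ ∃ n : ℕ, x = (0, n, 0) := by
  simp [subexp, AddSubmonoid.mem_multiples_iff, rb, eq_comm]

def model (P : Prog) : PhaseModel Store where
  pole := pole P
  val p := {atomTok p}
  subexp := subexp
  subexp_anti := by rintro u v (rfl | rfl) <;> simp [subexp]
  subexp_inf := rfl

variable {P : Prog}

theorem interp_raA_inter_subexp : (model P).interp raA ∩ subexp .la ⊆ {ra} := by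
  rintro _ ⟨hz, hzs⟩
  obtain ⟨n, rfl⟩ := mem_subexp_la.mp hzs
  have htest : ctl .testA ∈ orth (pole P) {ra} := by
    rintro _ rfl
    rw [add_comm]
    exact add_ctl_mem_pole.mpr ⟨rfl, rfl, rfl⟩
  obtain ⟨-, rfl, -⟩ := add_ctl_mem_pole.mp (hz _ htest)
  rfl

theorem interp_rbA_inter_subexp : (model P).interp rbA ∩ subexp .lb ⊆ {rb} := by
  rintro _ ⟨hz, hzs⟩
  obtain ⟨n, rfl⟩ := mem_subexp_lb.mp hzs
  have htest : ctl .testB ∈ orth (pole P) {rb} := by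
    rintro _ rfl
    rw [add_comm]
    exact add_ctl_mem_pole.mpr ⟨rfl, rfl, rfl⟩
  obtain ⟨-, -, rfl⟩ := add_ctl_mem_pole.mp (hz _ htest)
  rfl

theorem ra_mem_dual_qa : ra ∈ (model P).dual qa := ⟨rfl, AddSubmonoid.mem_multiples ra⟩

theorem rb_mem_dual_qb : rb ∈ (model P).dual qb := ⟨rfl, AddSubmonoid.mem_multiples rb⟩

theorem ctl_add_mem_pole {x : Store} {c : Ctl} :
    ctl c + x ∈ pole P ↔ x.2.2 = 0 ∧ Accepts P c x.1 x.2.1 := by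
  rw [add_comm]
  exact add_ctl_mem_pole

theorem mem_orth_ctl {y : Store} {c : Ctl} :
    y ∈ orth (pole P) {ctl c} ↔ y.2.2 = 0 ∧ Accepts P c y.1 y.2.1 := by
  simp [orth, add_ctl_mem_pole]

theorem zero_mem_dual_halt_state {q : ℕ} (he : (q, Instr.halt, 0) ∈ P) (hq : q ≠ 0) :
    0 ∈ (model P).dual (.tens (stA q) nH) := by
  refine PhaseModel.zero_mem_dual_tens (X := {ctl (.state q)}) subset_rfl subset_orth_orth ?_
  rintro _ ⟨_, rfl, y, hy, rfl⟩
  obtain ⟨hy, -⟩ := mem_orth_ctl.mp hy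
  exact ctl_add_mem_pole.mpr ⟨hy, Halts.of_step (Step.halt he hq) .refl⟩

theorem zero_mem_dual_halt_raA : 0 ∈ (model P).dual (.tens (.tens hA (.bang .la raA)) nH) := by
  refine PhaseModel.zero_mem_dual_tens (X := {ctl .halt} + {ra})
    ((PhaseModel.interp_tens_subset subset_rfl subset_rfl).trans
      (orth_anti (orth_anti (Set.add_subset_add_left interp_raA_inter_subexp))))
    subset_orth_orth ?_
  rintro _ ⟨_, ⟨_, rfl, _, rfl, rfl⟩, y, hy, rfl⟩
  obtain ⟨hy, -⟩ := mem_orth_ctl.mp hy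
  beta_reduce
  rw [add_assoc]
  exact ctl_add_mem_pole.mpr ⟨by simpa [ra] using hy, trivial⟩

theorem zero_mem_dual_halt_rbA : 0 ∈ (model P).dual (.tens (.tens hA (.bang .lb rbA)) nH) := by
  refine PhaseModel.zero_mem_dual_tens (X := {ctl .halt} + {rb})
    ((PhaseModel.interp_tens_subset subset_rfl subset_rfl).trans
      (orth_anti (orth_anti (Set.add_subset_add_left interp_rbA_inter_subexp))))
    subset_orth_orth ?_
  rintro _ ⟨_, ⟨_, rfl, _, rfl, rfl⟩, y, hy, rfl⟩
  obtain ⟨hy, -⟩ := mem_orth_ctl.mp hy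
  beta_reduce
  rw [add_assoc]
  exact ctl_add_mem_pole.mpr ⟨by simpa [rb] using hy, trivial⟩

theorem zero_mem_dual_halt_one : 0 ∈ (model P).dual (.tens hA (.bang .inf .one)) := by
  refine PhaseModel.zero_mem_dual_tens (X := {ctl .halt}) subset_rfl subset_rfl ?_
  rintro _ ⟨_, rfl, y, ⟨-, hy⟩, rfl⟩
  obtain rfl : y = 0 := hy
  exact ctl_add_mem_pole.mpr ⟨rfl, trivial⟩

theorem zero_mem_dual_incra {q r : ℕ} (he : (q, Instr.incra, r) ∈ P) (hqr : q ≠ r) :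
    0 ∈ (model P).dual (.tens (stA q) (.par (nSt r) qa)) := by
  refine PhaseModel.zero_mem_dual_tens (X := {ctl (.state q)}) subset_rfl subset_orth_orth ?_
  rintro _ ⟨_, rfl, y, hy, rfl⟩
  have hr := hy (ctl (.state r) + ra) (Set.add_mem_add rfl ra_mem_dual_qa)
  rw [add_comm (ctl _), ← add_assoc] at hr
  obtain ⟨hy0, hH⟩ := add_ctl_mem_pole.mp hr
  simp only [ra, Prod.fst_add, Prod.snd_add, add_zero] at hy0 hH
  exact ctl_add_mem_pole.mpr ⟨hy0, Halts.of_step (Step.incra he hqr) hH⟩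

theorem zero_mem_dual_incrb {q r : ℕ} (he : (q, Instr.incrb, r) ∈ P) (hqr : q ≠ r) :
    0 ∈ (model P).dual (.tens (stA q) (.par (nSt r) qb)) := by
  refine PhaseModel.zero_mem_dual_tens (X := {ctl (.state q)}) subset_rfl subset_orth_orth ?_
  rintro _ ⟨_, rfl, y, hy, rfl⟩
  have hr := hy (ctl (.state r) + rb) (Set.add_mem_add rfl rb_mem_dual_qb)
  rw [add_comm (ctl _), ← add_assoc] at hr
  obtain ⟨hy0, hH⟩ := add_ctl_mem_pole.mp hr
  simp only [rb, Prod.fst_add, Prod.snd_add, add_zero] at hy0 hH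
  exact ctl_add_mem_pole.mpr ⟨hy0, Halts.of_step (Step.incrb he hqr) hH⟩

theorem zero_mem_dual_decra {q r : ℕ} (he : (q, Instr.decra, r) ∈ P) (hqr : q ≠ r) :
    0 ∈ (model P).dual (.tens (.tens (stA q) (.bang .la raA)) (nSt r)) := by
  refine PhaseModel.zero_mem_dual_tens (X := {ctl (.state q)} + {ra})
    ((PhaseModel.interp_tens_subset subset_rfl subset_rfl).trans
      (orth_anti (orth_anti (Set.add_subset_add_left interp_raA_inter_subexp))))
    subset_orth_orth ?_
  rintro _ ⟨_, ⟨_, rfl, _, rfl, rfl⟩, y, hy, rfl⟩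
  obtain ⟨hy0, hH⟩ := mem_orth_ctl.mp hy
  beta_reduce
  rw [add_assoc]
  refine ctl_add_mem_pole.mpr ?_
  simpa [ra, Accepts, add_comm] using And.intro hy0 (Halts.of_step (Step.decra he hqr) hH)

theorem zero_mem_dual_decrb {q r : ℕ} (he : (q, Instr.decrb, r) ∈ P) (hqr : q ≠ r) :
    0 ∈ (model P).dual (.tens (.tens (stA q) (.bang .lb rbA)) (nSt r)) := by
  refine PhaseModel.zero_mem_dual_tens (X := {ctl (.state q)} + {rb})
    ((PhaseModel.interp_tens_subset subset_rfl subset_rfl).trans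
      (orth_anti (orth_anti (Set.add_subset_add_left interp_rbA_inter_subexp))))
    subset_orth_orth ?_
  rintro _ ⟨_, ⟨_, rfl, _, rfl, rfl⟩, y, hy, rfl⟩
  obtain ⟨hy0, hH⟩ := mem_orth_ctl.mp hy
  beta_reduce
  rw [add_assoc]
  refine ctl_add_mem_pole.mpr ?_
  simpa [rb, Accepts, add_comm] using And.intro hy0 (Halts.of_step (Step.decrb he hqr) hH)

theorem zero_mem_dual_isza {q r : ℕ} (he : (q, Instr.isza, r) ∈ P) (hqr : q ≠ r) :
    0 ∈ (model P).dual (.tens (stA q) (.bang .lb (nSt r))) := by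
  refine PhaseModel.zero_mem_dual_tens (X := {ctl (.state q)}) subset_rfl subset_rfl ?_
  rintro _ ⟨_, rfl, y, ⟨hy, hyb⟩, rfl⟩
  obtain ⟨n, rfl⟩ := mem_subexp_lb.mp hyb
  obtain ⟨-, hH⟩ := mem_orth_ctl.mp hy
  exact ctl_add_mem_pole.mpr ⟨rfl, Halts.of_step (Step.isza he hqr) hH⟩

theorem zero_mem_dual_iszb {q r : ℕ} (he : (q, Instr.iszb, r) ∈ P) (hqr : q ≠ r) :
    0 ∈ (model P).dual (.tens (stA q) (.bang .la (nSt r))) := by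
  refine PhaseModel.zero_mem_dual_tens (X := {ctl (.state q)}) subset_rfl subset_rfl ?_
  rintro _ ⟨_, rfl, y, ⟨hy, hya⟩, rfl⟩
  obtain ⟨n, rfl⟩ := mem_subexp_la.mp hya
  obtain ⟨-, hH⟩ := mem_orth_ctl.mp hy
  exact ctl_add_mem_pole.mpr ⟨rfl, Halts.of_step (Step.iszb he hqr) hH⟩

theorem zero_mem_dual_of_mem_encInstr (hwf : WellFormed P) {e : ℕ × Instr × ℕ} (he : e ∈ P)
    {F : Fm} (hF : F ∈ encInstr e) : 0 ∈ (model P).dual F := by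
  obtain ⟨q, i, r⟩ := e
  obtain ⟨hhalt, hnext⟩ := hwf _ he
  cases i with
  | halt =>
    obtain ⟨rfl, hq⟩ := hhalt rfl
    simp only [encInstr, Multiset.insert_eq_cons, Multiset.mem_cons,
      Multiset.mem_singleton] at hF
    rcases hF with rfl | rfl | rfl | rfl
    exacts [zero_mem_dual_halt_state he hq, zero_mem_dual_halt_raA, zero_mem_dual_halt_rbA,
      zero_mem_dual_halt_one]
  | incra => rw [Multiset.mem_singleton.mp hF]; exact zero_mem_dual_incra he (hnext nofun)
  | incrb => rw [Multiset.mem_singleton.mp hF]; exact zero_mem_dual_incrb he (hnext nofun)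
  | decra => rw [Multiset.mem_singleton.mp hF]; exact zero_mem_dual_decra he (hnext nofun)
  | decrb => rw [Multiset.mem_singleton.mp hF]; exact zero_mem_dual_decrb he (hnext nofun)
  | isza => rw [Multiset.mem_singleton.mp hF]; exact zero_mem_dual_isza he (hnext nofun)
  | iszb => rw [Multiset.mem_singleton.mp hF]; exact zero_mem_dual_iszb he (hnext nofun)

theorem state_mem_pole {q k l : ℕ} :
    ((k, l, {Ctl.state q}) : Store) ∈ pole P ↔ Halts P ⟨q, k, l⟩ := by
  simpa [ctl, Accepts] using add_ctl_mem_pole (P := P) (x := (k, l, 0)) (c := .state q)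

theorem mem_sum_dual_encCfg (c : Cfg) :
    ((c.a, c.b, {Ctl.state c.q}) : Store) ∈ ((encCfg c).map (model P).dual).sum := by
  simp only [encCfg, Multiset.map_add, Multiset.sum_add, Multiset.map_replicate,
    Multiset.sum_replicate, Multiset.map_singleton, Multiset.sum_singleton]
  have hq : ctl (.state c.q) ∈ (model P).dual (nSt c.q) := rfl
  simpa [ra, rb, ctl] using Set.add_mem_add
    (Set.add_mem_add (Set.nsmul_mem_nsmul ra_mem_dual_qa) (Set.nsmul_mem_nsmul rb_mem_dual_qb)) hq

end Store

theorem derivable_implies_halting_general (M : Prog) (hwf : WellFormed M) (c₀ : Cfg)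
    (h : Der (encSeq M c₀)) : Halts M c₀ := by
  have hPi : 0 ∈ ((qmInf (PiCtx M)).map (Store.model M).dual).sum :=
    PhaseModel.zero_mem_sum_dual_qmInf fun F hF =>
      let ⟨_, he, hFe⟩ := mem_PiCtx.mp hF
      Store.zero_mem_dual_of_mem_encInstr hwf he hFe
  have hc₀ : ((c₀.a, c₀.b, {Ctl.state c₀.q}) : Store) ∈
      ((encSeq M c₀).map (Store.model M).dual).sum := by
    rw [encSeq, Multiset.map_add, Multiset.sum_add]
    simpa using Set.add_mem_add hPi (Store.mem_sum_dual_encCfg c₀)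
  exact Store.state_mem_pole.mp ((Store.model M).sum_dual_subset_pole h hc₀)

/-- If the MSEL_Σ₂ sequent `⊢ ?^∞Π, ⟨c₀⟩` is derivable in the
(unfocused) sequent calculus, then the two-register Minsky machine halts from
the initial configuration `c₀`. -/
theorem derivable_implies_halting (M : Prog) (hdet : Deterministic M)
    (hwf : WellFormed M) (c₀ : Cfg)
    (h : Der (encSeq M c₀)) : Halts M c₀ :=
  derivable_implies_halting_general M hwf c₀ h

end Msel
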